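/- For a nonempty set 𝔓 of probability measures on (Ω,𝓕), the following are equivalent: (1) L^∞_𝐜 is super Dedekind complete; (2) 𝔓 is dominated, i.e. there is a probability measure P on (Ω,𝓕) such that every P-null event is 𝔓-polar; (3) every μ ∈ ca_𝐜 is supported (sca_𝐜 = ca_𝐜) and L^∞_𝐜 has the countable sup property; (4) there is a strictly positive linear functional ξ: L^∞_𝐜 → ℝ (ξ(X) > 0 whenever 0 ≺ X). -/

import Mathlib

/-!
Conditions (2) and (4) each yield a functional `Φ` on `L^∞_𝐜` that is monotone and detects strict
increase up to polar sets: `f ↦ ∫ arctan f dP` for a dominating `P`, or `ξ` itself. For a family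
bounded by `h`, maximize `Φ` over truncated suprema of countable subfamilies; a maximizing
subfamily exists because countable unions of countable sets are countable, and its supremum
bounds every member q.s., since adding a member cannot increase `Φ`. This gives (1).

Under (1), the null sets of any measure have a largest element up to polar sets (the countable
union realizing the supremum of their indicators), and its complement is an order support, so
(3) holds. Under (3), the indicators of the supports of the `P ∈ 𝔓` have supremum `1`, realized
by countably many `Q₀, Q₁, …`; the mixture `∑ 2⁻⁽ⁿ⁺¹⁾ Qₙ` then has exactly the polar sets as null
sets, which gives (2), and its expectation is strictly positive, which gives (4).
-/

open MeasureTheory Set Filter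

namespace Robust

universe u

variable {Ω : Type*} [MeasurableSpace Ω]

/-- `N` is a `𝔓`-polar event: every measure in `𝔓` assigns it measure zero. -/
def Polar (𝔓 : Set (Measure Ω)) (N : Set Ω) : Prop := ∀ P ∈ 𝔓, P N = 0

/-- `f ≤ g` holds `𝔓`-quasi surely. -/
def QSLe (𝔓 : Set (Measure Ω)) (f g : Ω → ℝ) : Prop := Polar 𝔓 {ω | ¬ f ω ≤ g ω}

/-- `f = g` holds `𝔓`-quasi surely; this is the equivalence relation defining `L⁰_𝐜`. -/
def QSEq (𝔓 : Set (Measure Ω)) (f g : Ω → ℝ) : Prop := QSLe 𝔓 f g ∧ QSLe 𝔓 g f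

/-- A representative of an element of `L^∞_𝐜`: a measurable, `𝔓`-q.s. bounded function. -/
def MemLinf (𝔓 : Set (Measure Ω)) (f : Ω → ℝ) : Prop :=
  Measurable f ∧ ∃ m : ℝ, QSLe 𝔓 (fun ω => |f ω|) fun _ => m

/-- The `L^∞_𝐜` norm of (the class of) `f`. -/
noncomputable def linfNorm (𝔓 : Set (Measure Ω)) (f : Ω → ℝ) : ℝ :=
  sInf {m : ℝ | 0 ≤ m ∧ QSLe 𝔓 (fun ω => |f ω|) fun _ => m}

/-- `g` is a `𝔓`-q.s. upper bound of the set of functions `S`. -/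
def IsQSUB (𝔓 : Set (Measure Ω)) (S : Set (Ω → ℝ)) (g : Ω → ℝ) : Prop := ∀ f ∈ S, QSLe 𝔓 f g

/-- `g` is a `𝔓`-q.s. lower bound of the set of functions `S`. -/
def IsQSLB (𝔓 : Set (Measure Ω)) (S : Set (Ω → ℝ)) (g : Ω → ℝ) : Prop := ∀ f ∈ S, QSLe 𝔓 g f

/-- `g` is a supremum of `S` in `L⁰_𝐜` (least upper bound for the q.s. order). -/
def IsQSSup (𝔓 : Set (Measure Ω)) (S : Set (Ω → ℝ)) (g : Ω → ℝ) : Prop :=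
  IsQSUB 𝔓 S g ∧ ∀ h : Ω → ℝ, Measurable h → IsQSUB 𝔓 S h → QSLe 𝔓 g h

/-- `g` is an infimum of `S` in `L⁰_𝐜` (greatest lower bound for the q.s. order). -/
def IsQSInf (𝔓 : Set (Measure Ω)) (S : Set (Ω → ℝ)) (g : Ω → ℝ) : Prop :=
  IsQSLB 𝔓 S g ∧ ∀ h : Ω → ℝ, Measurable h → IsQSLB 𝔓 S h → QSLe 𝔓 h g

/-- `S` is an order support of the measure `μ` relative to `𝔓`. -/
def IsOrderSupport (𝔓 : Set (Measure Ω)) (μ : Measure Ω) (S : Set Ω) : Prop :=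
  MeasurableSet S ∧ μ Sᶜ = 0 ∧
    ∀ N : Set Ω, MeasurableSet N → μ (N ∩ S) = 0 → Polar 𝔓 (N ∩ S)

/-- The measure `μ` is supported (relative to the polar events of `𝔓`). -/
def Supported (𝔓 : Set (Measure Ω)) (μ : Measure Ω) : Prop := ∃ S, IsOrderSupport 𝔓 μ S

/-- Two sets of measures are equivalent: they have the same polar events. -/
def PolarEquiv (𝔓 𝔔 : Set (Measure Ω)) : Prop :=
  ∀ N : Set Ω, MeasurableSet N → (Polar 𝔓 N ↔ Polar 𝔔 N)

/-- `𝔔` is a supported alternative to `𝔓`. -/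
def IsSuppAlt (𝔓 𝔔 : Set (Measure Ω)) : Prop :=
  𝔔.Nonempty ∧ (∀ Q ∈ 𝔔, IsProbabilityMeasure Q) ∧ PolarEquiv 𝔓 𝔔 ∧ ∀ Q ∈ 𝔔, Supported 𝔓 Q

/-- `𝔓` is of class (S). -/
def ClassS (𝔓 : Set (Measure Ω)) : Prop := ∃ 𝔔 : Set (Measure Ω), IsSuppAlt 𝔓 𝔔

/-- The total variation norm of a signed measure. -/
noncomputable def tv (μ : SignedMeasure Ω) : ℝ := (μ.totalVariation Set.univ).toReal

/-- `ca_𝐜`: signed measures whose total variation vanishes on `𝔓`-polar events. -/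
def caC (𝔓 : Set (Measure Ω)) : Set (SignedMeasure Ω) :=
  {μ | ∀ N : Set Ω, MeasurableSet N → Polar 𝔓 N → μ.totalVariation N = 0}

/-- `sca_𝐜`: members of `ca_𝐜` whose total variation is supported. -/
def scaC (𝔓 : Set (Measure Ω)) : Set (SignedMeasure Ω) :=
  {μ | μ ∈ caC 𝔓 ∧ Supported 𝔓 μ.totalVariation}

/-- Integral of `f` against a signed measure, via the Jordan decomposition. -/
noncomputable def integSM (f : Ω → ℝ) (μ : SignedMeasure Ω) : ℝ :=
  ∫ ω, f ω ∂μ.toJordanDecomposition.posPart - ∫ ω, f ω ∂μ.toJordanDecomposition.negPart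

/-- `ca_{𝐜,+}`: finite (nonnegative) measures vanishing on `𝔓`-polar events. -/
def caCpos (𝔓 : Set (Measure Ω)) : Set (Measure Ω) :=
  {μ | IsFiniteMeasure μ ∧ ∀ N : Set Ω, MeasurableSet N → Polar 𝔓 N → μ N = 0}

/-- Order convergence in `L⁰_𝐜` of a net `X` to `x`: there is an antitone net of measurable
functions with q.s. infimum `0` dominating `|X α - x|`. -/
def OrderConvTo (𝔓 : Set (Measure Ω)) {ι : Type u} [Preorder ι]
    (X : ι → Ω → ℝ) (x : Ω → ℝ) : Prop :=
  ∃ Y : ι → Ω → ℝ, (∀ α, Measurable (Y α)) ∧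
    (∀ α β, α ≤ β → QSLe 𝔓 (Y β) (Y α)) ∧
    IsQSInf 𝔓 (Set.range Y) (fun _ => 0) ∧
    ∀ α, QSLe 𝔓 (fun ω => |X α ω - x ω|) (Y α)

/-- Order convergence in `L^∞_𝐜` of a net `X` to `x`: the dominating net lies in `L^∞_𝐜`. -/
def OrderConvToLinf (𝔓 : Set (Measure Ω)) {ι : Type u} [Preorder ι]
    (X : ι → Ω → ℝ) (x : Ω → ℝ) : Prop :=
  ∃ Y : ι → Ω → ℝ, (∀ α, MemLinf 𝔓 (Y α)) ∧
    (∀ α β, α ≤ β → QSLe 𝔓 (Y β) (Y α)) ∧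
    IsQSInf 𝔓 (Set.range Y) (fun _ => 0) ∧
    ∀ α, QSLe 𝔓 (fun ω => |X α ω - x ω|) (Y α)

/-- A set of (classes of) functions in `L⁰_𝐜` is order closed: it contains (a representative of)
the order limit of every order convergent net of its elements. -/
def OrderClosedL0 (𝔓 : Set (Measure Ω)) (𝒞 : Set (Ω → ℝ)) : Prop :=
  ∀ (ι : Type u) [Preorder ι] [IsDirected ι (· ≤ ·)] [Nonempty ι],
    ∀ (X : ι → Ω → ℝ) (x : Ω → ℝ), (∀ α, X α ∈ 𝒞) → Measurable x →
      OrderConvTo 𝔓 X x → ∃ x' ∈ 𝒞, QSEq 𝔓 x x'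

/-- A subset of `L^∞_𝐜` is order closed. -/
def OrderClosedLinf (𝔓 : Set (Measure Ω)) (𝒞 : Set (Ω → ℝ)) : Prop :=
  ∀ (ι : Type u) [Preorder ι] [IsDirected ι (· ≤ ·)] [Nonempty ι],
    ∀ (X : ι → Ω → ℝ) (x : Ω → ℝ), (∀ α, X α ∈ 𝒞) → MemLinf 𝔓 x →
      OrderConvToLinf 𝔓 X x → ∃ x' ∈ 𝒞, QSEq 𝔓 x x'

/-- `L^∞_𝐜` is Dedekind complete: every nonempty subset bounded above has a supremum. -/
def LinfDedekind (𝔓 : Set (Measure Ω)) : Prop :=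
  ∀ S : Set (Ω → ℝ), S.Nonempty → (∀ f ∈ S, MemLinf 𝔓 f) →
    (∃ h, MemLinf 𝔓 h ∧ IsQSUB 𝔓 S h) →
    ∃ g, MemLinf 𝔓 g ∧ IsQSSup 𝔓 S g

/-- `L^∞_𝐜` has the countable sup property. -/
def LinfCountableSup (𝔓 : Set (Measure Ω)) : Prop :=
  ∀ S : Set (Ω → ℝ), (∀ f ∈ S, MemLinf 𝔓 f) →
    ∀ g, MemLinf 𝔓 g → IsQSSup 𝔓 S g →
      ∃ D ⊆ S, D.Countable ∧ IsQSSup 𝔓 D g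

/-- indicator function of a set, real valued. -/
noncomputable def indC (A : Set Ω) : Ω → ℝ := A.indicator 1

/-- `𝔓` is dominated by a single probability measure. -/
def Dominated (𝔓 : Set (Measure Ω)) : Prop :=
  ∃ P : Measure Ω, IsProbabilityMeasure P ∧
    ∀ N : Set Ω, MeasurableSet N → P N = 0 → Polar 𝔓 N

/-- `ξ` is a strictly positive linear functional on `L^∞_𝐜`. -/
def StrictlyPositiveFunctional (𝔓 : Set (Measure Ω)) (ξ : (Ω → ℝ) → ℝ) : Prop :=
  (∀ f g : Ω → ℝ, MemLinf 𝔓 f → MemLinf 𝔓 g → QSEq 𝔓 f g → ξ f = ξ g) ∧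
  (∀ f g : Ω → ℝ, MemLinf 𝔓 f → MemLinf 𝔓 g → ξ (f + g) = ξ f + ξ g) ∧
  (∀ (c : ℝ) (f : Ω → ℝ), MemLinf 𝔓 f → ξ (c • f) = c * ξ f) ∧
  (∀ f : Ω → ℝ, MemLinf 𝔓 f → QSLe 𝔓 0 f → ¬ QSEq 𝔓 f 0 → 0 < ξ f)

end Robust

namespace Robust

variable {Ω : Type*}

lemma exists_countable_subset_image_eq {α β : Type*} [Nonempty α] {f : α → β} {s : Set α}
    {D : Set β} (hD : D.Countable) (hDs : D ⊆ f '' s) : ∃ t ⊆ s, t.Countable ∧ f '' t = D := by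
  refine ⟨Function.invFunOn f s '' D, ?_, hD.image _, ?_⟩
  · rintro _ ⟨y, hy, rfl⟩
    exact Function.invFunOn_mem (hDs hy)
  · rw [image_image]
    exact (image_congr fun y hy => Function.invFunOn_eq (hDs hy)).trans (image_id' D)

/-- The maximum is attained at the union of a maximizing sequence. -/
lemma exists_countable_forall_le {α : Type*} {S : Set α} (hS : S.Nonempty) (F : Set α → ℝ)
    (hmono : ∀ D E, D.Nonempty → D ⊆ E → E ⊆ S → E.Countable → F D ≤ F E)
    (hbdd : ∃ C, ∀ D ⊆ S, D.Countable → D.Nonempty → F D ≤ C) :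
    ∃ D ⊆ S, D.Countable ∧ D.Nonempty ∧ ∀ E ⊆ S, E.Countable → D ⊆ E → F E ≤ F D := by
  obtain ⟨C, hC⟩ := hbdd
  set T : Set ℝ := {r | ∃ D ⊆ S, D.Countable ∧ D.Nonempty ∧ F D = r}
  have hT : T.Nonempty := ⟨_, {hS.some}, singleton_subset_iff.2 hS.some_mem,
    countable_singleton _, singleton_nonempty _, rfl⟩
  have hTC : BddAbove T := ⟨C, by rintro _ ⟨D, hDS, hDc, hDne, rfl⟩; exact hC D hDS hDc hDne⟩
  obtain ⟨x, -, hx, hxT⟩ := exists_seq_tendsto_sSup hT hTC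
  choose D hDS hDc hDne hDx using hxT
  have hUS : ⋃ n, D n ⊆ S := iUnion_subset hDS
  have hUc : (⋃ n, D n).Countable := countable_iUnion hDc
  have hUne : (⋃ n, D n).Nonempty := (hDne 0).mono (subset_iUnion D 0)
  have hsup : sSup T ≤ F (⋃ n, D n) := le_of_tendsto' hx fun n =>
    hDx n ▸ hmono _ _ (hDne n) (subset_iUnion D n) hUS hUc
  exact ⟨⋃ n, D n, hUS, hUc, hUne, fun E hES hEc hUE =>
    (le_csSup hTC ⟨E, hES, hEc, hUne.mono hUE, rfl⟩).trans hsup⟩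

lemma indC_apply_of_mem {A : Set Ω} {ω : Ω} (hω : ω ∈ A) : indC A ω = 1 := by
  simp [indC, hω]

lemma indC_apply_of_notMem {A : Set Ω} {ω : Ω} (hω : ω ∉ A) : indC A ω = 0 := by
  simp [indC, hω]

lemma indC_le_one (A : Set Ω) : indC A ≤ 1 := fun ω => by
  by_cases hω : ω ∈ A <;> simp [indC, hω]

lemma indC_mono {A B : Set Ω} (hAB : A ⊆ B) : indC A ≤ indC B :=
  indicator_le_indicator_of_subset hAB fun _ => zero_le_one

section TruncSup

variable {D E : Set (Ω → ℝ)} {h : Ω → ℝ}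

/-- Truncating by `h` bounds the family above, so for nonempty `D` the `⨆` is a genuine
supremum (for `D = ∅` it is the junk value `0`). -/
noncomputable def truncSup (D : Set (Ω → ℝ)) (h : Ω → ℝ) : Ω → ℝ :=
  fun ω => ⨆ f : D, min ((f : Ω → ℝ) ω) (h ω)

lemma min_le_truncSup {f : Ω → ℝ} (hf : f ∈ D) (ω : Ω) : min (f ω) (h ω) ≤ truncSup D h ω :=
  le_ciSup (f := fun f : D => min ((f : Ω → ℝ) ω) (h ω))
    ⟨h ω, forall_mem_range.2 fun _ => min_le_right _ _⟩ ⟨f, hf⟩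

lemma truncSup_le (hD : D.Nonempty) {ω : Ω} {c : ℝ} (hc : ∀ f ∈ D, min (f ω) (h ω) ≤ c) :
    truncSup D h ω ≤ c :=
  haveI := hD.to_subtype
  ciSup_le fun f => hc f f.2

lemma truncSup_le_right (hD : D.Nonempty) : truncSup D h ≤ h :=
  fun _ => truncSup_le hD fun _ _ => min_le_right _ _

lemma truncSup_mono (hD : D.Nonempty) (hDE : D ⊆ E) : truncSup D h ≤ truncSup E h :=
  fun ω => truncSup_le hD fun _ hf => min_le_truncSup (hDE hf) ω

end TruncSup

variable [MeasurableSpace Ω]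

section QuasiSure

variable {𝔓 : Set (Measure Ω)}

lemma Polar.mono {N M : Set Ω} (hM : Polar 𝔓 M) (h : N ⊆ M) : Polar 𝔓 N :=
  fun P hP => measure_mono_null h (hM P hP)

lemma Polar.union {N M : Set Ω} (hN : Polar 𝔓 N) (hM : Polar 𝔓 M) : Polar 𝔓 (N ∪ M) :=
  fun P hP => measure_union_null (hN P hP) (hM P hP)

lemma polar_biUnion {ι : Type*} {I : Set ι} (hI : I.Countable) {N : ι → Set Ω}
    (h : ∀ i ∈ I, Polar 𝔓 (N i)) : Polar 𝔓 (⋃ i ∈ I, N i) :=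
  fun P hP => (measure_biUnion_null_iff hI).2 fun i hi => h i hi P hP

lemma not_polar_univ (h𝔓 : 𝔓.Nonempty) (hprob : ∀ P ∈ 𝔓, IsProbabilityMeasure P) :
    ¬ Polar 𝔓 (univ : Set Ω) := by
  obtain ⟨P, hP⟩ := h𝔓
  have := hprob P hP
  exact fun h => one_ne_zero (measure_univ.symm.trans (h P hP))

lemma qsle_of_le {f g : Ω → ℝ} (h : f ≤ g) : QSLe 𝔓 f g :=
  Polar.mono (fun _ _ => measure_empty) fun ω hω => hω (h ω)

lemma QSLe.of_imp {f g f' g' : Ω → ℝ} (h : QSLe 𝔓 f g)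
    (himp : ∀ ω, f ω ≤ g ω → f' ω ≤ g' ω) : QSLe 𝔓 f' g' :=
  Polar.mono h fun ω hω hle => hω (himp ω hle)

lemma QSLe.of_imp₂ {f₁ g₁ f₂ g₂ f g : Ω → ℝ} (h₁ : QSLe 𝔓 f₁ g₁) (h₂ : QSLe 𝔓 f₂ g₂)
    (himp : ∀ ω, f₁ ω ≤ g₁ ω → f₂ ω ≤ g₂ ω → f ω ≤ g ω) : QSLe 𝔓 f g :=
  Polar.mono (Polar.union h₁ h₂) fun ω hω => by
    by_contra hc
    simp only [mem_union, mem_ofPred_eq, not_or, not_not] at hc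
    exact hω (himp ω hc.1 hc.2)

lemma QSLe.trans {f g h : Ω → ℝ} (hfg : QSLe 𝔓 f g) (hgh : QSLe 𝔓 g h) : QSLe 𝔓 f h :=
  hfg.of_imp₂ hgh fun _ => le_trans

lemma not_isQSSup_empty (h𝔓 : 𝔓.Nonempty) (hprob : ∀ P ∈ 𝔓, IsProbabilityMeasure P)
    {g : Ω → ℝ} (hg : Measurable g) : ¬ IsQSSup 𝔓 ∅ g := fun ⟨_, hleast⟩ =>
  not_polar_univ h𝔓 hprob <| Polar.mono
    (hleast (g - 1) (hg.sub measurable_const) fun _ hf => absurd hf (notMem_empty _))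
    fun ω _ => by simp

lemma memLinf_const (c : ℝ) : MemLinf 𝔓 fun _ => c :=
  ⟨measurable_const, |c|, qsle_of_le le_rfl⟩

lemma MemLinf.sub {f g : Ω → ℝ} (hf : MemLinf 𝔓 f) (hg : MemLinf 𝔓 g) : MemLinf 𝔓 (f - g) := by
  obtain ⟨hfm, a, ha⟩ := hf
  obtain ⟨hgm, b, hb⟩ := hg
  exact ⟨hfm.sub hgm, a + b, ha.of_imp₂ hb fun ω hfa hgb =>
    (abs_sub (f ω) (g ω)).trans (add_le_add hfa hgb)⟩

section NullSets

variable {P : Measure Ω}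

lemma ae_le_of_qsle (hP : ∀ N, MeasurableSet N → Polar 𝔓 N → P N = 0) {f g : Ω → ℝ}
    (hf : Measurable f) (hg : Measurable g) (h : QSLe 𝔓 f g) : f ≤ᵐ[P] g :=
  ae_iff.2 (hP _ (measurableSet_le hf hg).compl h)

lemma qsle_of_ae_le (hdom : ∀ N, MeasurableSet N → P N = 0 → Polar 𝔓 N) {f g : Ω → ℝ}
    (hf : Measurable f) (hg : Measurable g) (h : f ≤ᵐ[P] g) : QSLe 𝔓 f g :=
  hdom _ (measurableSet_le hf hg).compl (ae_iff.1 h)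

lemma MemLinf.integrable [IsFiniteMeasure P] (hP : ∀ N, MeasurableSet N → Polar 𝔓 N → P N = 0)
    {f : Ω → ℝ} (hf : MemLinf 𝔓 f) : Integrable f P := by
  obtain ⟨hfm, a, ha⟩ := hf
  exact Integrable.of_bound hfm.aestronglyMeasurable a
    (ae_le_of_qsle hP hfm.abs measurable_const ha)

end NullSets

end QuasiSure

section Indicator

variable {𝔓 : Set (Measure Ω)}

lemma measurable_indC {A : Set Ω} (hA : MeasurableSet A) : Measurable (indC A) :=
  measurable_one.indicator hA

lemma memLinf_indC {A : Set Ω} (hA : MeasurableSet A) : MemLinf 𝔓 (indC A) :=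
  ⟨measurable_indC hA, 1, qsle_of_le fun ω => by by_cases h : ω ∈ A <;> simp [indC, h]⟩

lemma polar_diff_of_qsle_indC {A B : Set Ω} (h : QSLe 𝔓 (indC A) (indC B)) :
    Polar 𝔓 (A \ B) :=
  Polar.mono h fun ω ⟨hA, hB⟩ => by
    simp [indC_apply_of_mem hA, indC_apply_of_notMem hB]

lemma IsQSSup.qsle_indC_biUnion {ι : Type*} {I : Set ι} (hI : I.Countable) {A : ι → Set Ω}
    (hA : ∀ i ∈ I, MeasurableSet (A i)) {g : Ω → ℝ}
    (hg : IsQSSup 𝔓 ((fun i => indC (A i)) '' I) g) : QSLe 𝔓 g (indC (⋃ i ∈ I, A i)) :=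
  hg.2 _ (measurable_indC (MeasurableSet.biUnion hI hA)) <| forall_mem_image.2 fun _ hi =>
    qsle_of_le (indC_mono (subset_biUnion_of_mem hi))

end Indicator

section TruncSup

variable {𝔓 : Set (Measure Ω)} {D E : Set (Ω → ℝ)} {h : Ω → ℝ}

lemma measurable_truncSup (hD : D.Countable) (hm : ∀ f ∈ D, Measurable f) (hh : Measurable h) :
    Measurable (truncSup D h) :=
  haveI := hD.to_subtype
  Measurable.iSup fun f => (hm f f.2).min hh

lemma memLinf_truncSup (hDc : D.Countable) (hDne : D.Nonempty) (hm : ∀ f ∈ D, MemLinf 𝔓 f)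
    (hh : MemLinf 𝔓 h) : MemLinf 𝔓 (truncSup D h) := by
  obtain ⟨f, hf⟩ := hDne
  obtain ⟨-, a, ha⟩ := hm f hf
  obtain ⟨hhm, b, hb⟩ := hh
  refine ⟨measurable_truncSup hDc (fun f hf => (hm f hf).1) hhm, max a b,
    ha.of_imp₂ hb fun ω hfa hhb => abs_le.2 ⟨?_, ?_⟩⟩
  · have := abs_le.1 hfa
    have := abs_le.1 hhb
    exact (le_min (by grind) (by grind)).trans (min_le_truncSup hf ω)
  · exact (truncSup_le_right ⟨f, hf⟩ ω).trans ((le_abs_self _).trans (hhb.trans (le_max_right _ _)))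

lemma truncSup_qsle (hDc : D.Countable) (hDne : D.Nonempty) {g : Ω → ℝ} (hg : IsQSUB 𝔓 D g) :
    QSLe 𝔓 (truncSup D h) g :=
  Polar.mono (polar_biUnion hDc hg) fun ω hω => by
    simp only [mem_iUnion, mem_ofPred_eq]
    by_contra! hc
    exact hω (truncSup_le hDne fun f hf => (min_le_left _ _).trans (hc f hf))

end TruncSup

/-- Monotonicity is for the pointwise order, not `QSLe`, so that integrals against a dominating
measure (which may charge polar sets) qualify. -/
def IsQSStrictMono (𝔓 : Set (Measure Ω)) (Φ : (Ω → ℝ) → ℝ) : Prop :=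
  ∀ f g : Ω → ℝ, MemLinf 𝔓 f → MemLinf 𝔓 g → f ≤ g → Φ f ≤ Φ g ∧ (Φ g ≤ Φ f → QSLe 𝔓 g f)

namespace IsQSStrictMono

variable {𝔓 : Set (Measure Ω)} {Φ : (Ω → ℝ) → ℝ}

theorem exists_countable_isQSSup (hΦ : IsQSStrictMono 𝔓 Φ) {S : Set (Ω → ℝ)} (hS : S.Nonempty)
    (hSm : ∀ f ∈ S, MemLinf 𝔓 f) {h : Ω → ℝ} (hh : MemLinf 𝔓 h) (hub : IsQSUB 𝔓 S h) :
    ∃ D ⊆ S, D.Countable ∧ ∃ g, MemLinf 𝔓 g ∧ IsQSSup 𝔓 S g ∧ IsQSSup 𝔓 D g := by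
  have hmem : ∀ D ⊆ S, D.Countable → D.Nonempty → MemLinf 𝔓 (truncSup D h) :=
    fun D hDS hDc hDne => memLinf_truncSup hDc hDne (fun f hf => hSm f (hDS hf)) hh
  obtain ⟨D, hDS, hDc, hDne, hmax⟩ := exists_countable_forall_le hS (fun D => Φ (truncSup D h))
    (fun D E hD hDE hES hEc => (hΦ _ _ (hmem D (hDE.trans hES) (hEc.mono hDE) hD)
      (hmem E hES hEc (hD.mono hDE)) (truncSup_mono hD hDE)).1)
    ⟨Φ h, fun D hDS hDc hDne => (hΦ _ _ (hmem D hDS hDc hDne) hh (truncSup_le_right hDne)).1⟩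
  have hSD : IsQSUB 𝔓 S (truncSup D h) := by
    intro f hf
    have hins : insert f D ⊆ S := insert_subset hf hDS
    have hback : QSLe 𝔓 (truncSup (insert f D) h) (truncSup D h) :=
      (hΦ _ _ (hmem D hDS hDc hDne) (hmem _ hins (hDc.insert f) (insert_nonempty f D))
        (truncSup_mono hDne (subset_insert f D))).2 (hmax _ hins (hDc.insert f) (subset_insert f D))
    exact (hub f hf).of_imp₂ hback fun ω hfh hle =>
      (le_min le_rfl hfh).trans ((min_le_truncSup (mem_insert f D) ω).trans hle)
  exact ⟨D, hDS, hDc, truncSup D h, hmem D hDS hDc hDne,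
    ⟨hSD, fun g _ hg => truncSup_qsle hDc hDne fun f hf => hg f (hDS hf)⟩,
    ⟨fun f hf => hSD f (hDS hf), fun _ _ hg => truncSup_qsle hDc hDne hg⟩⟩

lemma linfDedekind (hΦ : IsQSStrictMono 𝔓 Φ) : LinfDedekind 𝔓 := by
  rintro S hS hSm ⟨h, hh, hub⟩
  obtain ⟨-, -, -, g, hg, hSg, -⟩ := hΦ.exists_countable_isQSSup hS hSm hh hub
  exact ⟨g, hg, hSg⟩

lemma linfCountableSup (h𝔓 : 𝔓.Nonempty) (hprob : ∀ P ∈ 𝔓, IsProbabilityMeasure P)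
    (hΦ : IsQSStrictMono 𝔓 Φ) : LinfCountableSup 𝔓 := by
  intro S hSm g hg hsup
  obtain rfl | hS := S.eq_empty_or_nonempty
  · exact absurd hsup (not_isQSSup_empty h𝔓 hprob hg.1)
  obtain ⟨D, hDS, hDc, g', hg', hSg', hDg'⟩ := hΦ.exists_countable_isQSSup hS hSm hg hsup.1
  exact ⟨D, hDS, hDc, fun f hf => hsup.1 f (hDS hf),
    fun h hm hD => (hsup.2 g' hg'.1 hSg'.1).trans (hDg'.2 h hm hD)⟩

end IsQSStrictMono

lemma isQSStrictMono_integral_arctan {𝔓 : Set (Measure Ω)} {P : Measure Ω} [IsFiniteMeasure P]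
    (hdom : ∀ N, MeasurableSet N → P N = 0 → Polar 𝔓 N) :
    IsQSStrictMono 𝔓 fun f => ∫ ω, Real.arctan (f ω) ∂P := by
  have hint : ∀ f : Ω → ℝ, Measurable f → Integrable (fun ω => Real.arctan (f ω)) P :=
    fun f hf => Integrable.of_bound (Real.continuous_arctan.measurable.comp hf).aestronglyMeasurable
      (Real.pi / 2) (Eventually.of_forall fun ω => by
        rw [Real.norm_eq_abs, abs_le]
        exact ⟨(Real.neg_pi_div_two_lt_arctan _).le, (Real.arctan_lt_pi_div_two _).le⟩)
  intro f g hf hg hfg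
  have hle : (fun ω => Real.arctan (f ω)) ≤ᵐ[P] fun ω => Real.arctan (g ω) :=
    Eventually.of_forall fun ω => Real.arctan_strictMono.monotone (hfg ω)
  have hmono := integral_mono_ae (hint f hf.1) (hint g hg.1) hle
  refine ⟨hmono, fun hge => qsle_of_ae_le hdom hg.1 hf.1 ?_⟩
  have heq := (integral_eq_iff_of_ae_le (hint f hf.1) (hint g hg.1) hle).1 (hmono.antisymm hge)
  exact heq.mono fun ω h => (Real.arctan_injective h).ge

namespace StrictlyPositiveFunctional

variable {𝔓 : Set (Measure Ω)} {ξ : (Ω → ℝ) → ℝ}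

lemma map_zero (hξ : StrictlyPositiveFunctional 𝔓 ξ) : ξ 0 = 0 := by
  simpa using hξ.2.2.1 0 0 (memLinf_const 0)

lemma isQSStrictMono (hξ : StrictlyPositiveFunctional 𝔓 ξ) : IsQSStrictMono 𝔓 ξ := by
  intro f g hf hg hfg
  have hsplit : ξ g = ξ f + ξ (g - f) := by simpa using hξ.2.1 f (g - f) hf (hg.sub hf)
  by_cases h0 : QSEq 𝔓 (g - f) 0
  · have : ξ (g - f) = 0 := (hξ.1 _ _ (hg.sub hf) (memLinf_const 0) h0).trans hξ.map_zero
    exact ⟨by linarith, fun _ => h0.1.of_imp fun ω h => by simpa using h⟩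
  · have := hξ.2.2.2 _ (hg.sub hf) (qsle_of_le fun ω => sub_nonneg.2 (hfg ω)) h0
    exact ⟨by linarith, fun _ => by exfalso; linarith⟩

end StrictlyPositiveFunctional

lemma strictlyPositiveFunctional_integral {𝔓 : Set (Measure Ω)} {P : Measure Ω}
    [IsFiniteMeasure P] (hP : ∀ N, MeasurableSet N → (P N = 0 ↔ Polar 𝔓 N)) :
    StrictlyPositiveFunctional 𝔓 fun f => ∫ ω, f ω ∂P := by
  have hnull : ∀ N, MeasurableSet N → Polar 𝔓 N → P N = 0 := fun N hN => (hP N hN).2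
  refine ⟨fun f g hf hg hfg => integral_congr_ae ?_, fun f g hf hg => integral_add
    (hf.integrable hnull) (hg.integrable hnull), fun c f _ => integral_const_mul c _, ?_⟩
  · exact (ae_le_of_qsle hnull hf.1 hg.1 hfg.1).antisymm (ae_le_of_qsle hnull hg.1 hf.1 hfg.2)
  · intro f hf h0 hne
    have hpos : P {ω | ¬ f ω ≤ 0} ≠ 0 := fun hP0 =>
      hne ⟨(hP _ (measurableSet_le hf.1 measurable_const).compl).1 hP0, h0⟩
    refine (integral_pos_iff_support_of_nonneg_ae (ae_le_of_qsle hnull measurable_const hf.1 h0)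
      (hf.integrable hnull)).2 (pos_iff_ne_zero.2 fun hs => hpos (measure_mono_null ?_ hs))
    exact fun ω hω => ne_of_gt (not_le.1 hω)

section Support

variable {𝔓 : Set (Measure Ω)}

lemma supported_of_forall_polar_diff {m : Measure Ω} {U : Set Ω} (hU : MeasurableSet U)
    (hU0 : m U = 0) (hmax : ∀ N, MeasurableSet N → m N = 0 → Polar 𝔓 (N \ U)) :
    Supported 𝔓 m :=
  ⟨Uᶜ, hU.compl, by rwa [compl_compl], fun N hN hN0 =>
    Polar.mono (hmax (N ∩ Uᶜ) (hN.inter hU.compl) hN0) fun _ hω => ⟨hω, hω.2⟩⟩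

lemma supported_of_linfDedekind (hded : LinfDedekind 𝔓) (hcs : LinfCountableSup 𝔓)
    (m : Measure Ω) : Supported 𝔓 m := by
  set 𝒩 : Set (Set Ω) := {A | MeasurableSet A ∧ m A = 0}
  have hm : ∀ f ∈ indC '' 𝒩, MemLinf 𝔓 f := forall_mem_image.2 fun A hA => memLinf_indC hA.1
  obtain ⟨g, hg, hsup⟩ := hded (indC '' 𝒩) ⟨_, ∅, ⟨MeasurableSet.empty, measure_empty⟩, rfl⟩ hm
    ⟨1, memLinf_const 1, forall_mem_image.2 fun A _ => qsle_of_le (indC_le_one A)⟩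
  obtain ⟨D, hD𝒩, hDc, hDsup⟩ := hcs _ hm g hg hsup
  obtain ⟨𝒜, h𝒜, h𝒜c, rfl⟩ := exists_countable_subset_image_eq hDc hD𝒩
  have hU : MeasurableSet (⋃ A ∈ 𝒜, A) := MeasurableSet.biUnion h𝒜c fun A hA => (h𝒜 hA).1
  have hgU : QSLe 𝔓 g (indC (⋃ A ∈ 𝒜, A)) :=
    hDsup.qsle_indC_biUnion h𝒜c (A := id) fun A hA => (h𝒜 hA).1
  have hU0 : m (⋃ A ∈ 𝒜, A) = 0 := (measure_biUnion_null_iff h𝒜c).2 fun A hA => (h𝒜 hA).2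
  refine supported_of_forall_polar_diff hU hU0 fun N hN hN0 => ?_
  have hNU : QSLe 𝔓 (indC (N ∪ ⋃ A ∈ 𝒜, A)) g :=
    hsup.1 _ ⟨_, ⟨hN.union hU, measure_union_null hN0 hU0⟩, rfl⟩
  simpa using polar_diff_of_qsle_indC (hNU.trans hgU)

lemma scaC_eq_caC (hded : LinfDedekind 𝔓) (hcs : LinfCountableSup 𝔓) : scaC 𝔓 = caC 𝔓 :=
  (Subset.antisymm (fun _ hμ => hμ.1) fun _ hμ => ⟨hμ, supported_of_linfDedekind hded hcs _⟩)

lemma totalVariation_toSignedMeasure (P : Measure Ω) [IsFiniteMeasure P] :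
    P.toSignedMeasure.totalVariation = P := by
  have : P.toSignedMeasure.toJordanDecomposition = ⟨P, 0, Measure.MutuallySingular.zero_right⟩ :=
    SignedMeasure.toJordanDecomposition_eq (by simp [JordanDecomposition.toSignedMeasure])
  simp [SignedMeasure.totalVariation, this]

lemma supported_of_scaC_eq_caC (hsca : scaC 𝔓 = caC 𝔓) {P : Measure Ω} [IsFiniteMeasure P]
    (hP : P ∈ 𝔓) : Supported 𝔓 P := by
  have hmem : P.toSignedMeasure ∈ scaC 𝔓 := hsca ▸ fun N _ hN => by
    rw [totalVariation_toSignedMeasure]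
    exact hN P hP
  simpa [totalVariation_toSignedMeasure] using hmem.2

lemma isQSSup_indC_support {supp : Measure Ω → Set Ω}
    (hsupp : ∀ P ∈ 𝔓, IsOrderSupport 𝔓 P (supp P)) :
    IsQSSup 𝔓 ((fun P => indC (supp P)) '' 𝔓) 1 := by
  refine ⟨forall_mem_image.2 fun P _ => qsle_of_le (indC_le_one _), fun h _ hub Q hQ => ?_⟩
  -- off `supp Q` the event is `Q`-null, on it `indC (supp Q) ≤ h` q.s.
  refine measure_mono_null (fun ω hω => ?_) (measure_union_null (hub _ ⟨Q, hQ, rfl⟩ Q hQ)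
    (hsupp Q hQ).2.1)
  by_cases hs : ω ∈ supp Q
  · exact Or.inl (by simpa [indC_apply_of_mem hs] using hω)
  · exact Or.inr hs

lemma exists_isProbabilityMeasure_null_iff {𝔔 : Set (Measure Ω)} (hc : 𝔔.Countable)
    (hne : 𝔔.Nonempty) (hprob : ∀ Q ∈ 𝔔, IsProbabilityMeasure Q) :
    ∃ P : Measure Ω, IsProbabilityMeasure P ∧
      ∀ N, MeasurableSet N → (P N = 0 ↔ ∀ Q ∈ 𝔔, Q N = 0) := by
  obtain ⟨Q, rfl⟩ := hc.exists_eq_range hne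
  have hQ : ∀ n, Q n univ = 1 := fun n => (hprob _ (mem_range_self n)).measure_univ
  set P : Measure Ω := Measure.sum fun n => (2⁻¹ : ENNReal) ^ (n + 1) • Q n
  have happ : ∀ N, MeasurableSet N → P N = ∑' n, 2⁻¹ ^ (n + 1) * Q n N :=
    fun N hN => by simp [P, Measure.sum_apply _ hN]
  refine ⟨P, ⟨?_⟩, fun N hN => ?_⟩
  · simp only [happ univ MeasurableSet.univ, hQ, mul_one, pow_succ, ENNReal.tsum_mul_right,
      ENNReal.tsum_geometric_two]
    exact ENNReal.mul_inv_cancel two_ne_zero ENNReal.ofNat_ne_top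
  · simp [happ N hN, ENNReal.tsum_eq_zero]

lemma exists_countable_subset_null_iff_polar (h𝔓 : 𝔓.Nonempty)
    (hprob : ∀ P ∈ 𝔓, IsProbabilityMeasure P) (hsupp : ∀ P ∈ 𝔓, Supported 𝔓 P)
    (hcs : LinfCountableSup 𝔓) :
    ∃ 𝔔 ⊆ 𝔓, 𝔔.Countable ∧ 𝔔.Nonempty ∧
      ∀ N, MeasurableSet N → (∀ Q ∈ 𝔔, Q N = 0) → Polar 𝔓 N := by
  choose! supp hsupp using hsupp
  have hm : ∀ f ∈ (fun P => indC (supp P)) '' 𝔓, MemLinf 𝔓 f :=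
    forall_mem_image.2 fun P hP => memLinf_indC (hsupp P hP).1
  obtain ⟨D, hD𝔓, hDc, hDsup⟩ := hcs _ hm 1 (memLinf_const 1) (isQSSup_indC_support hsupp)
  obtain ⟨𝔔, h𝔔, h𝔔c, rfl⟩ := exists_countable_subset_image_eq hDc hD𝔓
  have h𝔔ne : 𝔔.Nonempty := nonempty_iff_ne_empty.2 fun h => by
    subst h
    exact not_isQSSup_empty h𝔓 hprob (g := 1) measurable_one (by simpa using hDsup)
  have hcover : Polar 𝔓 (univ \ ⋃ Q ∈ 𝔔, supp Q) := polar_diff_of_qsle_indC <| by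
    simpa [indC] using hDsup.qsle_indC_biUnion h𝔔c fun Q hQ => (hsupp Q (h𝔔 hQ)).1
  refine ⟨𝔔, h𝔔, h𝔔c, h𝔔ne, fun N hN h0 => ?_⟩
  have hpieces : Polar 𝔓 (⋃ Q ∈ 𝔔, N ∩ supp Q) := polar_biUnion h𝔔c fun Q hQ =>
    (hsupp Q (h𝔔 hQ)).2.2 N hN (measure_mono_null inter_subset_left (h0 Q hQ))
  refine Polar.mono (hpieces.union hcover) fun ω hω => ?_
  by_cases hs : ω ∈ ⋃ Q ∈ 𝔔, supp Q
  · obtain ⟨Q, hQ, hωQ⟩ := mem_iUnion₂.1 hs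
    exact Or.inl (mem_iUnion₂.2 ⟨Q, hQ, hω, hωQ⟩)
  · exact Or.inr ⟨mem_univ ω, hs⟩

lemma exists_isProbabilityMeasure_null_iff_polar (h𝔓 : 𝔓.Nonempty)
    (hprob : ∀ P ∈ 𝔓, IsProbabilityMeasure P) (hsca : scaC 𝔓 = caC 𝔓)
    (hcs : LinfCountableSup 𝔓) :
    ∃ P : Measure Ω, IsProbabilityMeasure P ∧ ∀ N, MeasurableSet N → (P N = 0 ↔ Polar 𝔓 N) := by
  have hsupp : ∀ P ∈ 𝔓, Supported 𝔓 P := fun P hP =>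
    have := hprob P hP
    supported_of_scaC_eq_caC hsca hP
  obtain ⟨𝔔, h𝔔, h𝔔c, h𝔔ne, hpolar⟩ := exists_countable_subset_null_iff_polar h𝔓 hprob hsupp hcs
  obtain ⟨P, hP, hPnull⟩ := exists_isProbabilityMeasure_null_iff h𝔔c h𝔔ne
    fun Q hQ => hprob Q (h𝔔 hQ)
  exact ⟨P, hP, fun N hN => (hPnull N hN).trans
    ⟨hpolar N hN, fun hpol Q hQ => hpol Q (h𝔔 hQ)⟩⟩

end Support

/-- Proposition (thm:countsup): super Dedekind completeness of `L^∞_𝐜`, dominatedness of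
`𝔓`, `sca_𝐜 = ca_𝐜` together with the countable sup property, and the existence of a
strictly positive linear functional on `L^∞_𝐜` are all equivalent. -/
theorem superDedekind_tfae
    {Ω : Type*} [MeasurableSpace Ω] (𝔓 : Set (Measure Ω)) (h𝔓 : 𝔓.Nonempty)
    (hprob : ∀ P ∈ 𝔓, IsProbabilityMeasure P) :
    List.TFAE
      [LinfDedekind 𝔓 ∧ LinfCountableSup 𝔓,
       Dominated 𝔓,
       scaC 𝔓 = caC 𝔓 ∧ LinfCountableSup 𝔓,
       ∃ ξ : (Ω → ℝ) → ℝ, StrictlyPositiveFunctional 𝔓 ξ] := by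
  tfae_have 2 → 1 := by
    rintro ⟨P, hP, hdom⟩
    have hΦ := isQSStrictMono_integral_arctan hdom
    exact ⟨hΦ.linfDedekind, hΦ.linfCountableSup h𝔓 hprob⟩
  tfae_have 4 → 1 := fun ⟨_, hξ⟩ =>
    ⟨hξ.isQSStrictMono.linfDedekind, hξ.isQSStrictMono.linfCountableSup h𝔓 hprob⟩
  tfae_have 1 → 3 := fun ⟨hded, hcs⟩ => ⟨scaC_eq_caC hded hcs, hcs⟩
  tfae_have 3 → 2 := fun ⟨hsca, hcs⟩ => by
    obtain ⟨P, hP, hnull⟩ := exists_isProbabilityMeasure_null_iff_polar h𝔓 hprob hsca hcs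
    exact ⟨P, hP, fun N hN => (hnull N hN).1⟩
  tfae_have 3 → 4 := fun ⟨hsca, hcs⟩ => by
    obtain ⟨P, hP, hnull⟩ := exists_isProbabilityMeasure_null_iff_polar h𝔓 hprob hsca hcs
    exact ⟨_, strictlyPositiveFunctional_integral hnull⟩
  tfae_finish

end Robust
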